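/- arXiv:1705.07277 — 2 statements merged into one kernel-verified Lean document; each statement's English description precedes it below -/
import Mathlib

section
/- Let β > 1 with β ∉ ℕ and n ∈ ℕ. The maximal length of a run of consecutive full words in the lexicographically ordered Σ_β^n equals ⌊β⌋ + ε_M if ε(1,β) is finite with length M < n, and equals ⌊β⌋ if ε(1,β) is infinite or finite with length M ≥ n. -/
noncomputable def Tb (β x : ℝ) : ℝ := β * x - ⌊β * x⌋

/-- The (i+1)-th digit of the β-expansion of x (0-indexed). -/
noncomputable def dig (β x : ℝ) (i : ℕ) : ℕ := (⌊β * (Tb β)^[i] x⌋).toNat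

/-- w is an admissible word for base β. -/
def Adm (β : ℝ) (w : List ℕ) : Prop :=
  ∃ x, x ∈ Set.Ico (0:ℝ) 1 ∧ ∀ i (h : i < w.length), w[i] = dig β x i

/-- u is an admissible digit sequence for base β. -/
def AdmSeq (β : ℝ) (u : ℕ → ℕ) : Prop :=
  ∃ x, x ∈ Set.Ico (0:ℝ) 1 ∧ ∀ i, u i = dig β x i

/-- The cylinder I(w) ⊆ [0,1). -/
def cyl (β : ℝ) (w : List ℕ) : Set ℝ :=
  {x | x ∈ Set.Ico (0:ℝ) 1 ∧ ∀ i (h : i < w.length), w[i] = dig β x i}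

/-- w is a full word: T_β^{|w|} maps I(w) onto [0,1). -/
def Full (β : ℝ) (w : List ℕ) : Prop :=
  (Tb β)^[w.length] '' cyl β w = Set.Ico 0 1

/-- The β-expansion of 1 is finite with length M. -/
def FiniteLen (β : ℝ) (M : ℕ) : Prop :=
  0 < M ∧ dig β 1 (M-1) ≠ 0 ∧ ∀ j, M ≤ j → dig β 1 j = 0

open Classical in
/-- The (i+1)-th digit of the modified β-expansion ε*(1,β) (0-indexed). -/
noncomputable def modExp (β : ℝ) (i : ℕ) : ℕ :=
  if h : ∃ M, FiniteLen β M then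
    (if (i+1) % (Nat.find h) = 0 then dig β 1 (Nat.find h - 1) - 1
     else dig β 1 (i % Nat.find h))
  else dig β 1 i

/-- View a finite word as the sequence w0^∞. -/
def wordSeq (w : List ℕ) (i : ℕ) : ℕ := w.getD i 0

/-- Strict lexicographic order on sequences. -/
def seqLt (u v : ℕ → ℕ) : Prop := ∃ k, (∀ i, i < k → u i = v i) ∧ u k < v k

/-- Strict lexicographic order on finite words (identified with w0^∞). -/
def wlt (u v : List ℕ) : Prop := seqLt (wordSeq u) (wordSeq v)

/-- Concatenation of a finite word with a sequence. -/
def catSeq (w : List ℕ) (u : ℕ → ℕ) (i : ℕ) : ℕ :=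
  if h : i < w.length then w[i] else u (i - w.length)

open Classical in
/-- The largest position k ≤ s with ε_k ≠ 0 (greedy step). -/
noncomputable def greedyStep (β : ℝ) (s : ℕ) : ℕ :=
  Nat.findGreatest (fun k => 1 ≤ k ∧ dig β 1 (k-1) ≠ 0) s

/-- τ_β(s): number of terms in the greedy representation of s by nonzero positions. -/
noncomputable def tau (β : ℝ) : ℕ → ℕ
  | 0 => 0
  | s + 1 => tau β (s - (greedyStep β (s+1) - 1)) + 1
decreasing_by omega

open Classical in
/-- r_s(β): maximal length of a string of 0's in ε₁*⋯ε_s*. -/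
noncomputable def rrun (β : ℝ) (s : ℕ) : ℕ :=
  Nat.findGreatest (fun k => 1 ≤ k ∧ ∃ i, i + k ≤ s ∧ ∀ t, t < k → modExp β (i + t) = 0) s

/-- v is the immediate successor of u in the lexicographic order on Σ_β^n. -/
def SuccIn (β : ℝ) (n : ℕ) (u v : List ℕ) : Prop :=
  u.length = n ∧ v.length = n ∧ Adm β u ∧ Adm β v ∧ wlt u v ∧
  ¬ ∃ z : List ℕ, z.length = n ∧ Adm β z ∧ wlt u z ∧ wlt z v

/-- There is a run of l consecutive non-full words in Σ_β^n. -/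
def NonFullRun (β : ℝ) (n l : ℕ) : Prop :=
  ∃ f : ℕ → List ℕ,
    (∀ j, j < l → (f j).length = n ∧ Adm β (f j) ∧ ¬ Full β (f j)) ∧
    (∀ j, j + 1 < l → SuccIn β n (f j) (f (j+1)))

/-- There is a maximal run of l consecutive non-full words in Σ_β^n. -/
def MaxNonFullRun (β : ℝ) (n l : ℕ) : Prop :=
  0 < l ∧ ∃ f : ℕ → List ℕ,
    (∀ j, j < l → (f j).length = n ∧ Adm β (f j) ∧ ¬ Full β (f j)) ∧
    (∀ j, j + 1 < l → SuccIn β n (f j) (f (j+1))) ∧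
    (∀ u, SuccIn β n u (f 0) → Full β u) ∧
    (∀ u, SuccIn β n (f (l-1)) u → Full β u)

/-- There is a maximal run of l consecutive full words in Σ_β^n. -/
def MaxFullRun (β : ℝ) (n l : ℕ) : Prop :=
  0 < l ∧ ∃ f : ℕ → List ℕ,
    (∀ j, j < l → (f j).length = n ∧ Adm β (f j) ∧ Full β (f j)) ∧
    (∀ j, j + 1 < l → SuccIn β n (f j) (f (j+1))) ∧
    (∀ u, SuccIn β n u (f 0) → ¬ Full β u) ∧
    (∀ u, SuccIn β n (f (l-1)) u → ¬ Full β u)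

/-- The canonical decomposition of an admissible word, as in the structure theorem:
p.1 is the list of block lengths k₁,…,k_p and p.2 is the final length l. -/
def Decomp (β : ℝ) (w : List ℕ) (p : List ℕ × ℕ) : Prop :=
  1 ≤ p.2 ∧ (∀ k ∈ p.1, 1 ≤ k) ∧ p.1.sum + p.2 = w.length ∧
  (∀ j, j < p.1.length →
    (∀ t, t < p.1.getD j 0 - 1 → w.getD ((p.1.take j).sum + t) 0 = dig β 1 t) ∧
    w.getD ((p.1.take j).sum + (p.1.getD j 0 - 1)) 0 < dig β 1 (p.1.getD j 0 - 1)) ∧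
  (∀ t, t < p.2 - 1 → w.getD (p.1.sum + t) 0 = dig β 1 t) ∧
  w.getD (p.1.sum + (p.2 - 1)) 0 ≤ dig β 1 (p.2 - 1)

/-!
A word `w` of length `n` is read by a finite automaton whose state `k` records that
`T_β^n (I(w)) = [0, T_β^k 1)`; thus `I(w)` is an interval of length `T_β^k(1) / β^n` starting at
`value w = ∑ wᵢ β^{-(i+1)}`, `w` is full iff `k = 0`, and the lexicographic successor of `w` is the
word whose cylinder starts where `I(w)` ends.

For a full word `p a` with `p` in state `k`, the digit `a` satisfies `a + 1 ≤ β T_β^k(1) ≤ β`, so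
`a < ⌊β⌋`. Its successor is `p (a+1)` unless `a + 1 = β T_β^k(1)`; then it is `p' 0` with `p'` the
successor of `p`, and `T_β^{k+1}(1) = 0`, i.e. `ε(1,β)` is finite of length `M = k + 1 < n` and
`a + 1 = ε_M`. Such a reset happens at most once in a run: two words in the critical state `M - 1`
both end in `ε₁ ⋯ ε_{M-1}`, and since `ε₁ ≥ 1` (and `M ≥ 2` because `β ∉ ℕ`) they cannot be
consecutive. Hence a run has at most `⌊β⌋ + ε_M` words, and at most `⌊β⌋` without a reset.
The bounds are attained by `0^{n-1} j` (`j < ⌊β⌋`), and by `0^{n-M} ε₁ ⋯ ε_{M-1} j` (`j < ε_M`)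
followed by `0^{n-M-1} 1 0^{M-1} j` (`j < ⌊β⌋`).
-/

namespace BetaExpansion

open Set

variable {β : ℝ}

/-! ### The orbit of `1` -/

lemma Tb_nonneg (β x : ℝ) : 0 ≤ Tb β x := Int.fract_nonneg _

lemma Tb_lt_one (β x : ℝ) : Tb β x < 1 := Int.fract_lt_one _

lemma dig_eq_floor (β x : ℝ) (i : ℕ) : dig β x i = ⌊β * (Tb β)^[i] x⌋₊ := Int.floor_toNat _

lemma iterate_Tb_nonneg {x : ℝ} (hx : 0 ≤ x) : ∀ i, 0 ≤ (Tb β)^[i] x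
  | 0 => hx
  | i + 1 => by rw [Function.iterate_succ_apply']; exact Tb_nonneg _ _

lemma mul_iterate_Tb (hβ : 0 ≤ β) {x : ℝ} (hx : 0 ≤ x) (i : ℕ) :
    β * (Tb β)^[i] x = dig β x i + (Tb β)^[i + 1] x := by
  rw [Function.iterate_succ_apply', Tb, dig_eq_floor,
    natCast_floor_eq_intCast_floor (mul_nonneg hβ (iterate_Tb_nonneg hx i))]
  ring

noncomputable def orbitOne (β : ℝ) (k : ℕ) : ℝ := (Tb β)^[k] 1

lemma orbitOne_zero : orbitOne β 0 = 1 := rfl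

lemma orbitOne_succ (k : ℕ) : orbitOne β (k + 1) = Tb β (orbitOne β k) :=
  Function.iterate_succ_apply' _ _ _

lemma orbitOne_nonneg (k : ℕ) : 0 ≤ orbitOne β k := iterate_Tb_nonneg zero_le_one k

lemma orbitOne_lt_one {k : ℕ} (hk : k ≠ 0) : orbitOne β k < 1 := by
  obtain ⟨k, rfl⟩ := Nat.exists_eq_succ_of_ne_zero hk
  rw [orbitOne_succ]; exact Tb_lt_one _ _

lemma orbitOne_le_one (k : ℕ) : orbitOne β k ≤ 1 := by
  rcases eq_or_ne k 0 with rfl | hk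
  · exact orbitOne_zero.le
  · exact (orbitOne_lt_one hk).le

lemma dig_one_eq (k : ℕ) : dig β 1 k = ⌊β * orbitOne β k⌋₊ := dig_eq_floor _ _ _

lemma mul_orbitOne (hβ : 0 ≤ β) (k : ℕ) :
    β * orbitOne β k = dig β 1 k + orbitOne β (k + 1) :=
  mul_iterate_Tb hβ zero_le_one k

lemma orbitOne_eq_zero_of_le {t s : ℕ} (ht : orbitOne β t = 0) (hts : t ≤ s) :
    orbitOne β s = 0 := by
  induction s, hts using Nat.le_induction with
  | base => exact ht
  | succ s _ ih => rw [orbitOne_succ, ih, Tb, mul_zero, Int.floor_zero, Int.cast_zero, sub_zero]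

namespace FiniteLen

variable {M : ℕ} (hM : FiniteLen β M)
include hM

lemma orbitOne_eq_zero (hβ : 1 < β) : orbitOne β M = 0 := by
  have hshift : ∀ i, orbitOne β (M + i) = β ^ i * orbitOne β M := by
    intro i
    induction i with
    | zero => simp
    | succ i ih =>
      have h := mul_orbitOne (β := β) (by linarith) (M + i)
      rw [hM.2.2 (M + i) (by omega), Nat.cast_zero, zero_add] at h
      rw [← add_assoc, ← h, ih, pow_succ]; ring
  -- a positive value would grow like β ^ i inside [0, 1]
  by_contra hne
  have hpos : 0 < orbitOne β M := (orbitOne_nonneg M).lt_of_ne' hne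
  obtain ⟨i, hi⟩ := pow_unbounded_of_one_lt (1 / orbitOne β M) hβ
  rw [div_lt_iff₀ hpos, ← hshift] at hi
  linarith [orbitOne_le_one (β := β) (M + i)]

lemma orbitOne_pos {t : ℕ} (ht : t < M) : 0 < orbitOne β t := by
  refine (orbitOne_nonneg t).lt_of_ne' fun h0 => hM.2.1 ?_
  rw [dig_one_eq, orbitOne_eq_zero_of_le h0 (by omega : t ≤ M - 1), mul_zero, Nat.floor_zero]

lemma mul_orbitOne_pred (hβ : 1 < β) : β * orbitOne β (M - 1) = dig β 1 (M - 1) := by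
  rw [mul_orbitOne (by linarith), Nat.sub_add_cancel hM.1, FiniteLen.orbitOne_eq_zero hM hβ,
    add_zero]

lemma unique {M' : ℕ} (hM' : FiniteLen β M') : M = M' := by
  by_contra hne
  rcases Nat.lt_or_gt_of_ne hne with h | h
  · exact hM'.2.1 (hM.2.2 _ (by omega))
  · exact hM.2.1 (hM'.2.2 _ (by omega))

lemma two_le (hβ : 1 < β) (hβn : ∀ m : ℕ, β ≠ m) : 2 ≤ M := by
  by_contra h
  obtain rfl : M = 1 := by have := hM.1; omega
  have := FiniteLen.mul_orbitOne_pred hM hβ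
  rw [Nat.sub_self, orbitOne_zero, mul_one] at this
  exact hβn _ this

end FiniteLen

lemma finiteLen_of_mul_orbitOne_eq_natCast (hβ : 1 < β) {k a : ℕ}
    (hk : 0 < orbitOne β k) (ha : β * orbitOne β k = a) : FiniteLen β (k + 1) := by
  have hdig : dig β 1 k = a := by rw [dig_one_eq, ha, Nat.floor_natCast]
  have hzero : orbitOne β (k + 1) = 0 := by
    have h := mul_orbitOne (β := β) (by linarith) k
    rw [hdig, ha] at h
    linarith
  refine ⟨k.succ_pos, ?_, fun j hj => ?_⟩
  · rw [Nat.add_sub_cancel, hdig]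
    rintro rfl
    rw [Nat.cast_zero] at ha
    exact (mul_pos (by linarith) hk).ne' ha
  · rw [dig_one_eq, orbitOne_eq_zero_of_le hzero hj, mul_zero, Nat.floor_zero]

/-! ### Values of words and cylinders -/

noncomputable def value (β : ℝ) (w : List ℕ) : ℝ :=
  ∑ i ∈ Finset.range w.length, (w.getD i 0 : ℝ) / β ^ (i + 1)

lemma value_nil : value β [] = 0 := by simp [value]

lemma value_concat (w : List ℕ) (j : ℕ) :
    value β (w ++ [j]) = value β w + j / β ^ (w.length + 1) := by
  rw [value, value, List.length_append, List.length_singleton, Finset.sum_range_succ,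
    List.getD_append_right _ _ _ _ le_rfl, Nat.sub_self, List.getD_cons_zero]
  congr 1
  refine Finset.sum_congr rfl fun i hi => ?_
  rw [List.getD_append _ _ _ _ (Finset.mem_range.1 hi)]

lemma value_append (hβ : β ≠ 0) (A B : List ℕ) :
    value β (A ++ B) = value β A + value β B / β ^ A.length := by
  induction B using List.reverseRecOn with
  | nil => simp [value_nil]
  | append_singleton B j ih =>
    rw [← List.append_assoc, value_concat, ih, value_concat, List.length_append]
    field_simp
    ring

lemma value_replicate_zero (r : ℕ) : value β (List.replicate r 0) = 0 :=
  Finset.sum_eq_zero fun i _ => by simp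

lemma value_nonneg (hβ : 0 ≤ β) (w : List ℕ) : 0 ≤ value β w :=
  Finset.sum_nonneg fun _ _ => by positivity

noncomputable def prefixDigits (β x : ℝ) (n : ℕ) : List ℕ := List.ofFn fun i : Fin n => dig β x i

lemma length_prefixDigits (x : ℝ) (n : ℕ) : (prefixDigits β x n).length = n := by
  simp [prefixDigits]

lemma prefixDigits_succ (x : ℝ) (n : ℕ) :
    prefixDigits β x (n + 1) = prefixDigits β x n ++ [dig β x n] := by
  rw [prefixDigits, List.ofFn_succ']
  simp [prefixDigits]

lemma iterate_Tb_eq (hβ : 0 < β) {x : ℝ} (hx : 0 ≤ x) (n : ℕ) :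
    (Tb β)^[n] x = β ^ n * (x - value β (prefixDigits β x n)) := by
  induction n with
  | zero => simp [prefixDigits, value_nil]
  | succ n ih =>
    have h := mul_iterate_Tb hβ.le hx n
    rw [ih] at h
    rw [prefixDigits_succ, value_concat, length_prefixDigits]
    field_simp
    linear_combination -h

lemma mem_cyl_iff {x : ℝ} {w : List ℕ} :
    x ∈ cyl β w ↔ x ∈ Ico 0 1 ∧ prefixDigits β x w.length = w := by
  refine and_congr_right fun _ => ⟨fun h => ?_, fun h i hi => ?_⟩
  · refine List.ext_getElem (length_prefixDigits _ _) fun i _ hi => ?_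
    simp only [prefixDigits, List.getElem_ofFn]
    exact (h i hi).symm
  · rw [← List.getElem_of_eq h (by rwa [length_prefixDigits])]
    simp [prefixDigits]

lemma eq_of_mem_cyl {x : ℝ} {u v : List ℕ} (hu : x ∈ cyl β u) (hv : x ∈ cyl β v)
    (hlen : u.length = v.length) : u = v := by
  rw [← (mem_cyl_iff.1 hu).2, ← (mem_cyl_iff.1 hv).2, hlen]

lemma iterate_Tb_of_mem_cyl (hβ : 0 < β) {x : ℝ} {w : List ℕ} (hx : x ∈ cyl β w) :
    (Tb β)^[w.length] x = β ^ w.length * (x - value β w) := by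
  rw [iterate_Tb_eq hβ hx.1.1, (mem_cyl_iff.1 hx).2]

lemma cyl_take_subset (w : List ℕ) (m : ℕ) : cyl β w ⊆ cyl β (w.take m) := by
  rintro x ⟨hx, hw⟩
  exact ⟨hx, fun i hi => by rw [List.getElem_take, hw]⟩

lemma mem_cyl_concat {x : ℝ} {w : List ℕ} {j : ℕ} :
    x ∈ cyl β (w ++ [j]) ↔ x ∈ cyl β w ∧ dig β x w.length = j := by
  simp only [mem_cyl_iff, List.length_append, List.length_singleton, prefixDigits_succ]
  constructor
  · rintro ⟨hx, hw⟩
    obtain ⟨h1, h2⟩ := List.append_inj hw (length_prefixDigits x w.length)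
    exact ⟨⟨hx, h1⟩, List.singleton_inj.1 h2⟩
  · rintro ⟨⟨hx, hw⟩, rfl⟩
    exact ⟨hx, by rw [hw]⟩

lemma mem_cyl_concat_iff (hβ : 0 < β) {x : ℝ} {w : List ℕ} {j : ℕ} :
    x ∈ cyl β (w ++ [j]) ↔ x ∈ cyl β w ∧
      (j : ℝ) ≤ β ^ (w.length + 1) * (x - value β w) ∧
      β ^ (w.length + 1) * (x - value β w) < j + 1 := by
  rw [mem_cyl_concat]
  refine and_congr_right fun hx => ?_
  have h := iterate_Tb_of_mem_cyl hβ hx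
  have hnn : 0 ≤ β ^ (w.length + 1) * (x - value β w) := by
    rw [pow_succ', mul_assoc, ← h]
    exact mul_nonneg hβ.le (iterate_Tb_nonneg hx.1.1 _)
  rw [dig_eq_floor, h, ← mul_assoc, ← pow_succ', Nat.floor_eq_iff hnn]

/-! ### The automaton of admissible words -/

/-- The automaton reading the digits of admissible words: a word `w` reaches state `k` exactly
when `T_β^|w|` maps the cylinder `I(w)` onto `[0, T_β^k 1)`; `none` marks non-admissible words. -/
noncomputable def step (β : ℝ) (k j : ℕ) : Option ℕ :=
  if (j : ℝ) + 1 ≤ β * orbitOne β k then some 0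
  else if (j : ℝ) < β * orbitOne β k then some (k + 1) else none

noncomputable def state (β : ℝ) (w : List ℕ) : Option ℕ := w.foldlM (step β) 0

lemma state_nil : state β [] = some 0 := rfl

lemma state_append (A B : List ℕ) :
    state β (A ++ B) = (state β A).bind fun k => B.foldlM (step β) k :=
  List.foldlM_append

lemma state_concat (w : List ℕ) (j : ℕ) :
    state β (w ++ [j]) = (state β w).bind fun k => step β k j := by
  simp [state_append]

lemma step_eq_none_iff {k j : ℕ} : step β k j = none ↔ β * orbitOne β k ≤ j := by
  unfold step
  split_ifs with h1 h2 <;> simp only [false_iff, true_iff, not_le]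
  · linarith
  · exact h2
  · exact not_lt.1 h2

lemma exists_step_eq_some {k j : ℕ} (h : (j : ℝ) < β * orbitOne β k) :
    ∃ s, step β k j = some s :=
  Option.ne_none_iff_exists'.1 fun h' => (step_eq_none_iff.1 h').not_gt h

lemma lt_of_step_eq_some {k j s : ℕ} (h : step β k j = some s) : (j : ℝ) < β * orbitOne β k :=
  not_le.1 fun h' => by rw [step_eq_none_iff.2 h'] at h; cases h

lemma step_eq_zero_iff {k j : ℕ} : step β k j = some 0 ↔ (j : ℝ) + 1 ≤ β * orbitOne β k := by
  unfold step
  split_ifs with h1 h2 <;> simp [h1]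

lemma step_eq_some_cases {k j s : ℕ} (h : step β k j = some s) :
    s = 0 ∨ s = k + 1 ∧ j = dig β 1 k := by
  unfold step at h
  split_ifs at h with h1 h2 <;> cases h
  · exact Or.inl rfl
  · refine Or.inr ⟨rfl, ?_⟩
    rw [dig_one_eq, eq_comm, Nat.floor_eq_iff ((Nat.cast_nonneg j).trans h2.le)]
    exact ⟨h2.le, not_le.1 h1⟩

lemma orbitOne_of_step_eq_some (hβ : 0 ≤ β) {k j s : ℕ} (h : step β k j = some s) :
    orbitOne β s = min ((j : ℝ) + 1) (β * orbitOne β k) - j := by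
  unfold step at h
  split_ifs at h with h1 h2 <;> cases h
  · rw [min_eq_left h1, orbitOne_zero]; ring
  · have hdig : dig β 1 k = j := by
      rw [dig_one_eq, Nat.floor_eq_iff (mul_nonneg hβ (orbitOne_nonneg k))]
      exact ⟨h2.le, not_le.1 h1⟩
    rw [min_eq_right (not_le.1 h1).le, mul_orbitOne hβ, hdig]
    ring

lemma orbitOne_pos_of_step (hβ : 0 ≤ β) {k j s : ℕ} (h : step β k j = some s) :
    0 < orbitOne β s := by
  rw [orbitOne_of_step_eq_some hβ h, sub_pos, lt_min_iff]
  exact ⟨lt_add_one _, lt_of_step_eq_some h⟩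

lemma orbitOne_pos_of_state (hβ : 0 ≤ β) {w : List ℕ} {k : ℕ} (h : state β w = some k) :
    0 < orbitOne β k := by
  induction w using List.reverseRecOn generalizing k with
  | nil => cases h; exact one_pos
  | append_singleton w j _ =>
    rw [state_concat] at h
    obtain ⟨k', -, hk'⟩ := Option.bind_eq_some_iff.1 h
    exact orbitOne_pos_of_step hβ hk'

lemma lt_add_div_iff {q : ℝ} (hq : 0 < q) {a x t : ℝ} : x < a + t / q ↔ q * (x - a) < t := by
  rw [← sub_lt_iff_lt_add', lt_div_iff₀' hq]

lemma add_div_le_iff {q : ℝ} (hq : 0 < q) {a x t : ℝ} : a + t / q ≤ x ↔ t ≤ q * (x - a) := by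
  rw [← le_sub_iff_add_le', div_le_iff₀' hq]

lemma cyl_concat_eq (hβ : 0 < β) {w : List ℕ} {c : ℝ}
    (hw : cyl β w = Ico (value β w) (value β w + c / β ^ w.length)) (j : ℕ) :
    cyl β (w ++ [j]) =
      Ico (value β (w ++ [j])) (value β w + min ((j : ℝ) + 1) (β * c) / β ^ (w.length + 1)) := by
  have hq : 0 < β ^ (w.length + 1) := by positivity
  ext x
  have key : β ^ (w.length + 1) * (x - value β w) = β * (β ^ w.length * (x - value β w)) := by
    ring
  rw [mem_cyl_concat_iff hβ, hw, value_concat, mem_Ico, mem_Ico, add_div_le_iff hq,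
    lt_add_div_iff hq, lt_add_div_iff (pow_pos hβ _), lt_min_iff, key]
  have hj : (0 : ℝ) ≤ j := j.cast_nonneg
  constructor
  · rintro ⟨⟨-, hc⟩, hj1, hj2⟩
    exact ⟨hj1, hj2, mul_lt_mul_of_pos_left hc hβ⟩
  · rintro ⟨hj1, hj2, hc⟩
    refine ⟨⟨?_, lt_of_mul_lt_mul_left hc hβ.le⟩, hj1, hj2⟩
    have h0 := (mul_nonneg_iff_of_pos_left (pow_pos hβ w.length)).1
      ((mul_nonneg_iff_of_pos_left hβ).1 (hj.trans hj1))
    linarith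

/-- A non-admissible word (state `none`) gets an interval of length `0`, i.e. the empty cylinder. -/
lemma cyl_eq_Ico (hβ : 0 < β) (w : List ℕ) :
    cyl β w = Ico (value β w) (value β w + (state β w).elim 0 (orbitOne β) / β ^ w.length) := by
  induction w using List.reverseRecOn with
  | nil =>
    ext x
    simp [cyl, value_nil, state_nil, orbitOne_zero]
  | append_singleton w j ih =>
    rw [state_concat]
    rcases hs : state β w with _ | k
    · rw [hs, Option.elim_none, zero_div, add_zero, Ico_self] at ih
      rw [Option.bind_none, Option.elim_none, zero_div, add_zero, Ico_self]
      exact subset_empty_iff.1 (ih ▸ fun x hx => (mem_cyl_concat.1 hx).1)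
    · rw [hs] at ih
      rw [cyl_concat_eq hβ ih j, Option.bind_some, value_concat]
      rcases h : step β k j with _ | s
      · rw [Option.elim_none, zero_div, add_zero, Ico_self]
        apply Ico_eq_empty
        rw [not_lt]
        gcongr
        exact min_le_of_right_le (step_eq_none_iff.1 h)
      · dsimp only [Option.elim]
        rw [List.length_append, List.length_singleton, orbitOne_of_step_eq_some hβ.le h,
          add_assoc, ← add_div, add_sub_cancel]

lemma cyl_eq_empty_of_state (hβ : 0 < β) {w : List ℕ} (h : state β w = none) : cyl β w = ∅ := by
  rw [cyl_eq_Ico hβ, h]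
  simp

lemma cyl_eq_of_state (hβ : 0 < β) {w : List ℕ} {k : ℕ} (h : state β w = some k) :
    cyl β w = Ico (value β w) (value β w + orbitOne β k / β ^ w.length) := by
  rw [cyl_eq_Ico hβ, h]
  rfl

lemma value_mem_cyl (hβ : 0 < β) {w : List ℕ} {k : ℕ} (h : state β w = some k) :
    value β w ∈ cyl β w := by
  rw [cyl_eq_of_state hβ h]
  exact ⟨le_rfl, lt_add_of_pos_right _ (div_pos (orbitOne_pos_of_state hβ.le h) (by positivity))⟩

lemma adm_iff_exists_state (hβ : 0 < β) {w : List ℕ} : Adm β w ↔ ∃ k, state β w = some k := by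
  refine ⟨fun ⟨x, hx⟩ => ?_, fun ⟨k, hk⟩ => ⟨_, value_mem_cyl hβ hk⟩⟩
  change x ∈ cyl β w at hx
  rcases hs : state β w with _ | k
  · rw [cyl_eq_empty_of_state hβ hs] at hx
    exact hx.elim
  · exact ⟨k, rfl⟩

lemma Adm.take {w : List ℕ} (h : Adm β w) (m : ℕ) : Adm β (w.take m) :=
  let ⟨x, hx⟩ := h
  ⟨x, cyl_take_subset w m hx⟩

lemma image_cyl (hβ : 0 < β) {w : List ℕ} {k : ℕ} (h : state β w = some k) :
    (Tb β)^[w.length] '' cyl β w = Ico 0 (orbitOne β k) := by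
  have hq : 0 < β ^ w.length := by positivity
  ext y
  constructor
  · rintro ⟨x, hx, rfl⟩
    rw [iterate_Tb_of_mem_cyl hβ hx]
    rw [cyl_eq_of_state hβ h, mem_Ico, lt_add_div_iff hq] at hx
    exact ⟨mul_nonneg hq.le (sub_nonneg.2 hx.1), hx.2⟩
  · rintro ⟨hy0, hy1⟩
    have hx : value β w + y / β ^ w.length ∈ cyl β w := by
      rw [cyl_eq_of_state hβ h]
      exact ⟨le_add_of_nonneg_right (by positivity), by gcongr⟩
    refine ⟨_, hx, ?_⟩
    rw [iterate_Tb_of_mem_cyl hβ hx, add_sub_cancel_left, mul_div_cancel₀ _ hq.ne']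

lemma full_iff (hβ : 0 < β) {w : List ℕ} : Full β w ↔ state β w = some 0 := by
  rw [Full]
  rcases hs : state β w with _ | k
  · rw [cyl_eq_empty_of_state hβ hs, image_empty]
    simp only [reduceCtorEq, iff_false]
    exact fun h => (nonempty_Ico.2 one_pos).ne_empty h.symm
  · rw [image_cyl hβ hs, Option.some_inj]
    refine ⟨fun h => ?_, fun h => by rw [h, orbitOne_zero]⟩
    by_contra hk
    have : orbitOne β k ∈ Ico 0 (orbitOne β k) := h ▸ ⟨orbitOne_nonneg k, orbitOne_lt_one hk⟩
    exact lt_irrefl _ this.2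

/-! ### Lexicographic order and successors -/

lemma value_take_le (hβ : 0 ≤ β) (w : List ℕ) (m : ℕ) : value β (w.take m) ≤ value β w := by
  rw [value, value]
  refine (Finset.sum_le_sum fun i hi => ?_).trans
    (Finset.sum_le_sum_of_subset_of_nonneg (Finset.range_subset_range.2 (by simp)) fun _ _ _ => ?_)
  · rw [Finset.mem_range, List.length_take] at hi
    simp [List.getD_eq_getElem?_getD, (lt_min_iff.1 hi).1]
  · positivity

lemma take_succ_eq_concat {w : List ℕ} {k : ℕ} (hk : k < w.length) :
    w.take (k + 1) = w.take k ++ [w.getD k 0] := by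
  rw [List.take_add_one, List.getElem?_eq_getElem hk, List.getD_eq_getElem _ _ hk]; rfl

lemma take_eq_of_getD_eq {u v : List ℕ} {k : ℕ} (hu : k ≤ u.length) (hv : k ≤ v.length)
    (h : ∀ i < k, u.getD i 0 = v.getD i 0) : u.take k = v.take k :=
  List.ext_getElem (by simp; omega) fun i h1 h2 => by
    simp only [List.getElem_take]
    have := h i (by simp at h1; omega)
    rwa [List.getD_eq_getElem _ _ (by simp at h1; omega),
      List.getD_eq_getElem _ _ (by simp at h2; omega)] at this

lemma value_lt_of_wlt (hβ : 1 < β) {u v : List ℕ} (hu : Adm β u) (hlen : u.length = v.length)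
    (h : wlt u v) : value β u < value β v := by
  have hβ0 : 0 < β := by linarith
  obtain ⟨k, hpre, hk⟩ := h
  change u.getD k 0 < v.getD k 0 at hk
  have hkv : k < v.length := by
    by_contra hc
    rw [List.getD_eq_default _ _ (not_lt.1 hc)] at hk
    exact Nat.not_lt_zero _ hk
  have hku : k < u.length := hlen ▸ hkv
  obtain ⟨s, hs⟩ := (adm_iff_exists_state hβ0).1 (Adm.take hu (k + 1))
  obtain ⟨ku, hku'⟩ := (adm_iff_exists_state hβ0).1 hu
  have hmem : value β u ∈ cyl β (u.take (k + 1)) :=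
    cyl_take_subset u (k + 1) (value_mem_cyl hβ0 hku')
  rw [cyl_eq_of_state hβ0 hs, List.length_take, min_eq_left hku] at hmem
  have hprefix : value β (u.take (k + 1)) + 1 / β ^ (k + 1) ≤ value β (v.take (k + 1)) := by
    rw [take_succ_eq_concat hku, take_succ_eq_concat hkv, value_concat, value_concat,
      take_eq_of_getD_eq hku.le hkv.le hpre, List.length_take_of_le hkv.le, add_assoc, ← add_div]
    gcongr
    exact_mod_cast hk
  have hG : orbitOne β s / β ^ (k + 1) ≤ 1 / β ^ (k + 1) := by gcongr; exact orbitOne_le_one s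
  linarith [hmem.2, value_take_le hβ0.le v (k + 1)]

lemma wlt_total {u v : List ℕ} (hlen : u.length = v.length) (hne : u ≠ v) :
    wlt u v ∨ wlt v u := by
  classical
  have hex : ∃ i, u.getD i 0 ≠ v.getD i 0 := by
    by_contra! hc
    refine hne (List.ext_getElem hlen fun i h1 h2 => ?_)
    have := hc i
    rwa [List.getD_eq_getElem _ _ h1, List.getD_eq_getElem _ _ h2] at this
  have hpre : ∀ i < Nat.find hex, u.getD i 0 = v.getD i 0 := fun i hi =>
    not_not.1 (Nat.find_min hex hi)
  rcases lt_or_gt_of_ne (Nat.find_spec hex) with h | h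
  · exact Or.inl ⟨_, hpre, h⟩
  · exact Or.inr ⟨_, fun i hi => (hpre i hi).symm, h⟩

lemma wlt_iff_value_lt (hβ : 1 < β) {u v : List ℕ} (hu : Adm β u) (hv : Adm β v)
    (hlen : u.length = v.length) : wlt u v ↔ value β u < value β v := by
  refine ⟨value_lt_of_wlt hβ hu hlen, fun h => ?_⟩
  rcases wlt_total hlen (by rintro rfl; exact lt_irrefl _ h) with h' | h'
  · exact h'
  · exact absurd (value_lt_of_wlt hβ hv hlen.symm h') (not_lt.2 h.le)

lemma value_eq_of_right_end_mem_cyl (hβ : 0 < β) {p q : List ℕ} {k : ℕ}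
    (hp : state β p = some k) (hq : Adm β q) (hlen : p.length = q.length)
    (he : value β p + orbitOne β k / β ^ p.length ∈ cyl β q) :
    value β q = value β p + orbitOne β k / β ^ p.length := by
  set e := value β p + orbitOne β k / β ^ p.length
  obtain ⟨kq, hkq⟩ := (adm_iff_exists_state hβ).1 hq
  have hcp := cyl_eq_of_state hβ hp
  have hcq := cyl_eq_of_state hβ hkq
  have heq := he
  rw [hcq, mem_Ico] at heq
  by_contra hne
  -- the cylinders `I(p) = [value p, e)` and `I(q)` would overlap
  have hpq : p = q := by
    rcases le_or_gt (value β p) (value β q) with h | h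
    · refine eq_of_mem_cyl ?_ (value_mem_cyl hβ hkq) hlen
      rw [hcp]
      exact ⟨h, lt_of_le_of_ne heq.1 hne⟩
    · refine eq_of_mem_cyl (value_mem_cyl hβ hp) ?_ hlen
      have hpe : value β p < e :=
        lt_add_of_pos_right _ (div_pos (orbitOne_pos_of_state hβ.le hp) (by positivity))
      rw [hcq]
      exact ⟨h.le, hpe.trans heq.2⟩
  subst hpq
  rw [hcp] at he
  exact lt_irrefl _ he.2

lemma exists_adm_value_eq_right_end (hβ : 0 < β) {u : List ℕ} {k : ℕ}
    (hu : state β u = some k) (he : value β u + orbitOne β k / β ^ u.length < 1) :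
    ∃ z, z.length = u.length ∧ Adm β z ∧
      value β z = value β u + orbitOne β k / β ^ u.length := by
  set e := value β u + orbitOne β k / β ^ u.length
  have he0 : 0 ≤ e := add_nonneg (value_nonneg hβ.le u)
    (div_nonneg (orbitOne_nonneg k) (by positivity))
  have hmem : e ∈ cyl β (prefixDigits β e u.length) := by
    rw [mem_cyl_iff, length_prefixDigits]
    exact ⟨⟨he0, he⟩, rfl⟩
  refine ⟨_, length_prefixDigits e _, ⟨e, hmem⟩, ?_⟩
  exact value_eq_of_right_end_mem_cyl hβ hu ⟨e, hmem⟩ (length_prefixDigits e _).symm hmem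

lemma succIn_iff (hβ : 1 < β) {n : ℕ} {u v : List ℕ} {k : ℕ} (hu : state β u = some k)
    (hv : Adm β v) (hul : u.length = n) (hvl : v.length = n) :
    SuccIn β n u v ↔ value β v = value β u + orbitOne β k / β ^ n := by
  have hβ0 : 0 < β := by linarith
  have hua : Adm β u := (adm_iff_exists_state hβ0).2 ⟨k, hu⟩
  have hcu := cyl_eq_of_state hβ0 hu
  rw [hul] at hcu
  obtain ⟨kv, hkv⟩ := (adm_iff_exists_state hβ0).1 hv
  set e := value β u + orbitOne β k / β ^ n
  have hue : value β u < e :=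
    lt_add_of_pos_right _ (div_pos (orbitOne_pos_of_state hβ0.le hu) (by positivity))
  constructor
  · rintro ⟨-, -, -, -, hlt, hnot⟩
    rw [wlt_iff_value_lt hβ hua hv (hul.trans hvl.symm)] at hlt
    rcases lt_trichotomy (value β v) e with hve | hve | hve
    · have hmem : value β v ∈ cyl β u := hcu ▸ ⟨hlt.le, hve⟩
      obtain rfl := eq_of_mem_cyl hmem (value_mem_cyl hβ0 hkv) (hul.trans hvl.symm)
      exact absurd hlt (lt_irrefl _)
    · exact hve
    · obtain ⟨z, hzl, hza, hze⟩ := exists_adm_value_eq_right_end hβ0 hu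
        (by rw [hul]; exact hve.trans (value_mem_cyl hβ0 hkv).1.2)
      rw [hul] at hzl hze
      refine (hnot ⟨z, hzl, hza, ?_, ?_⟩).elim
      · rw [wlt_iff_value_lt hβ hua hza (hul.trans hzl.symm), hze]; exact hue
      · rw [wlt_iff_value_lt hβ hza hv (hzl.trans hvl.symm), hze]; exact hve
  · intro hve
    refine ⟨hul, hvl, hua, hv, ?_, ?_⟩
    · rw [wlt_iff_value_lt hβ hua hv (hul.trans hvl.symm), hve]; exact hue
    · rintro ⟨z, hzl, hza, huz, hzv⟩
      rw [wlt_iff_value_lt hβ hua hza (hul.trans hzl.symm)] at huz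
      rw [wlt_iff_value_lt hβ hza hv (hzl.trans hvl.symm), hve] at hzv
      obtain ⟨kz, hkz⟩ := (adm_iff_exists_state hβ0).1 hza
      obtain rfl := eq_of_mem_cyl (value_mem_cyl hβ0 hkz) (hcu ▸ ⟨huz.le, hzv⟩)
        (hzl.trans hul.symm)
      exact lt_irrefl _ huz

lemma eq_of_succIn_of_succIn (hβ : 1 < β) {n : ℕ} {u v v' : List ℕ} (h : SuccIn β n u v)
    (h' : SuccIn β n u v') : v = v' := by
  have hβ0 : 0 < β := by linarith
  obtain ⟨k, hk⟩ := (adm_iff_exists_state hβ0).1 h.2.2.1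
  obtain ⟨kv, hkv⟩ := (adm_iff_exists_state hβ0).1 h.2.2.2.1
  obtain ⟨kv', hkv'⟩ := (adm_iff_exists_state hβ0).1 h'.2.2.2.1
  have hval := ((succIn_iff hβ hk h.2.2.2.1 h.1 h.2.1).1 h).trans
    ((succIn_iff hβ hk h'.2.2.2.1 h'.1 h'.2.1).1 h').symm
  refine eq_of_mem_cyl (value_mem_cyl hβ0 hkv) ?_ (h.2.1.trans h'.2.1.symm)
  rw [hval]
  exact value_mem_cyl hβ0 hkv'

lemma getD_take_concat_replicate (u : List ℕ) {k : ℕ} (hk : k < u.length) (a r j : ℕ) :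
    (u.take k ++ [a] ++ List.replicate r 0).getD j 0 =
      if j < k then u.getD j 0 else if j = k then a else 0 := by
  have hlen : (u.take k).length = k := by simp; omega
  split_ifs with h1 h2
  · rw [List.getD_append _ _ _ _ (by simp; omega), List.getD_append _ _ _ _ (by omega)]
    simp [List.getD_eq_getElem?_getD, h1]
  · subst h2
    rw [List.getD_append _ _ _ _ (by simp; omega), List.getD_append_right _ _ _ _ (by omega)]
    simp [hlen]
  · rw [List.getD_append_right _ _ _ _ (by simp; omega)]
    simp [List.getD_eq_getElem?_getD, List.getElem?_replicate]
    grind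

lemma adm_concat_replicate_zero (hβ : 0 < β) {w : List ℕ} {a b : ℕ} (hw : Adm β (w ++ [b]))
    (hab : a ≤ b) (r : ℕ) : Adm β (w ++ [a] ++ List.replicate r 0) := by
  rw [adm_iff_exists_state hβ] at hw ⊢
  obtain ⟨s', hs'⟩ := hw
  rw [state_concat] at hs'
  obtain ⟨s, hs, hstep⟩ := Option.bind_eq_some_iff.1 hs'
  obtain ⟨t, ht⟩ := exists_step_eq_some ((Nat.cast_le.2 hab).trans_lt (lt_of_step_eq_some hstep))
  induction r with
  | zero => exact ⟨t, by rw [List.replicate_zero, List.append_nil, state_concat, hs,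
      Option.bind_some, ht]⟩
  | succ r ih =>
    obtain ⟨k, hk⟩ := ih
    obtain ⟨k', hk'⟩ := exists_step_eq_some (j := 0)
      (by rw [Nat.cast_zero]; exact mul_pos hβ (orbitOne_pos_of_state hβ.le hk))
    exact ⟨k', by rw [List.replicate_succ', ← List.append_assoc, state_concat, hk,
      Option.bind_some, hk']⟩

lemma exists_getD_of_succIn (hβ : 1 < β) {n : ℕ} {u v : List ℕ} (h : SuccIn β n u v) :
    ∃ i < n, (∀ j < i, v.getD j 0 = u.getD j 0) ∧ v.getD i 0 = u.getD i 0 + 1 ∧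
      ∀ j, i < j → v.getD j 0 = 0 := by
  have hβ0 : 0 < β := by linarith
  obtain ⟨hul, hvl, hua, hva, ⟨k, hpre, hk⟩, hnot⟩ := h
  change ∀ i < k, u.getD i 0 = v.getD i 0 at hpre
  change u.getD k 0 < v.getD k 0 at hk
  have hkv : k < v.length := by
    by_contra hc
    rw [List.getD_eq_default _ _ (not_lt.1 hc)] at hk
    exact Nat.not_lt_zero _ hk
  have hku : k < u.length := by omega
  -- the least word that agrees with `u` before position `k` and exceeds it there
  set z := u.take k ++ [u.getD k 0 + 1] ++ List.replicate (n - 1 - k) 0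
  have hz := getD_take_concat_replicate u hku (u.getD k 0 + 1) (n - 1 - k)
  have hzl : z.length = n := by simp [z]; omega
  have hza : Adm β z := by
    refine adm_concat_replicate_zero hβ0 ?_ hk _
    rw [take_eq_of_getD_eq hku.le hkv.le hpre, ← take_succ_eq_concat hkv]
    exact Adm.take hva (k + 1)
  have hvz : ¬ wlt v z := by
    rintro ⟨m, -, hm⟩
    change v.getD m 0 < z.getD m 0 at hm
    rw [hz] at hm
    split_ifs at hm with h1 h2
    · rw [hpre m h1] at hm; exact lt_irrefl _ hm
    · subst h2; omega
    · exact Nat.not_lt_zero _ hm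
  have hzv : z = v := by
    by_contra hne
    rcases wlt_total (hzl.trans hvl.symm) hne with hzv | hvz'
    · refine hnot ⟨z, hzl, hza, ⟨k, fun j hj => ?_, ?_⟩, hzv⟩
      · change u.getD j 0 = z.getD j 0
        rw [hz, if_pos hj]
      · change u.getD k 0 < z.getD k 0
        rw [hz, if_neg (lt_irrefl k), if_pos rfl]; omega
    · exact hvz hvz'
  refine ⟨k, by omega, fun j hj => ?_, ?_, fun j hj => ?_⟩
  · rw [← hzv, hz, if_pos hj]
  · rw [← hzv, hz, if_neg (lt_irrefl k), if_pos rfl]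
  · rw [← hzv, hz, if_neg (by omega), if_neg (by omega)]

lemma exists_eq_append_of_state {w : List ℕ} {k : ℕ} (h : state β w = some k) :
    ∃ x, w = x ++ prefixDigits β 1 k := by
  induction w using List.reverseRecOn generalizing k with
  | nil => cases h; exact ⟨[], rfl⟩
  | append_singleton w j ih =>
    rw [state_concat] at h
    obtain ⟨k₀, hk₀, hstep⟩ := Option.bind_eq_some_iff.1 h
    rcases step_eq_some_cases hstep with rfl | ⟨rfl, rfl⟩
    · exact ⟨w ++ [j], by simp [prefixDigits]⟩
    · obtain ⟨x, rfl⟩ := ih hk₀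
      exact ⟨x, by rw [prefixDigits_succ, List.append_assoc]⟩

lemma value_prefixDigits_one (hβ : 0 < β) (r : ℕ) :
    value β (prefixDigits β 1 r) = 1 - orbitOne β r / β ^ r := by
  have h := iterate_Tb_eq hβ zero_le_one r
  rw [← orbitOne] at h
  rw [h, mul_div_cancel_left₀ _ (pow_ne_zero r hβ.ne')]
  ring

lemma state_prefixDigits_one (hβ : 0 ≤ β) {r : ℕ} (hr : 0 < orbitOne β r) :
    state β (prefixDigits β 1 r) = some r := by
  induction r with
  | zero => rfl
  | succ r ih =>
    have hr' : 0 < orbitOne β r :=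
      (orbitOne_nonneg r).lt_of_ne' fun h0 => hr.ne' (orbitOne_eq_zero_of_le h0 r.le_succ)
    have h := mul_orbitOne hβ r
    rw [prefixDigits_succ, state_concat, ih hr', Option.bind_some, step,
      if_neg (by linarith [orbitOne_lt_one (β := β) r.succ_ne_zero]), if_pos (by linarith)]

lemma state_lt_of_succIn (hβ : 1 < β) {m : ℕ} {p q : List ℕ} {k : ℕ}
    (hp : state β p = some k) (h : SuccIn β m p q) : k < m := by
  have hβ0 : 0 < β := by linarith
  obtain ⟨x, hx⟩ := exists_eq_append_of_state hp
  have hkm : k ≤ m := by rw [← h.1, hx]; simp [length_prefixDigits]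
  refine lt_of_le_of_ne hkm fun hkm => ?_
  -- `p` would be the first `m` digits of `1`, whose cylinder ends at `1`
  subst hkm
  obtain rfl : x = [] := by
    have := congrArg List.length hx
    rw [h.1, List.length_append, length_prefixDigits] at this
    exact List.eq_nil_of_length_eq_zero (by omega)
  obtain ⟨kq, hkq⟩ := (adm_iff_exists_state hβ0).1 h.2.2.2.1
  have hq := (succIn_iff hβ hp h.2.2.2.1 h.1 h.2.1).1 h
  rw [hx, List.nil_append, value_prefixDigits_one hβ0, sub_add_cancel] at hq
  exact (value_mem_cyl hβ0 hkq).1.2.ne hq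

lemma one_le_dig_one_zero (hβ : 1 < β) : 1 ≤ dig β 1 0 := by
  rw [dig_one_eq, orbitOne_zero, mul_one]
  exact Nat.le_floor (by rw [Nat.cast_one]; exact hβ.le)

lemma not_succIn_of_state_eq_pred (hβ : 1 < β) (hβn : ∀ m : ℕ, β ≠ m) {M : ℕ}
    (hM : FiniteLen β M) {m : ℕ} {p q : List ℕ} (hp : state β p = some (M - 1))
    (hq : state β q = some (M - 1)) : ¬ SuccIn β m p q := by
  intro h
  have hM2 := FiniteLen.two_le hM hβ hβn
  obtain ⟨i, him, -, hi, hpost⟩ := exists_getD_of_succIn hβ h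
  obtain ⟨x, rfl⟩ := exists_eq_append_of_state hp
  obtain ⟨y, rfl⟩ := exists_eq_append_of_state hq
  have hxl : x.length = m - (M - 1) := by
    have := h.1; simp only [List.length_append, length_prefixDigits] at this; omega
  have hyl : y.length = m - (M - 1) := by
    have := h.2.1; simp only [List.length_append, length_prefixDigits] at this; omega
  have hsuffix : ∀ (z : List ℕ), z.length = m - (M - 1) → ∀ t < M - 1,
      (z ++ prefixDigits β 1 (M - 1)).getD (m - (M - 1) + t) 0 = dig β 1 t := by
    intro z hz t ht
    rw [List.getD_append_right _ _ _ _ (by omega), hz, Nat.add_sub_cancel_left,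
      List.getD_eq_getElem _ _ (by rwa [length_prefixDigits])]
    simp [prefixDigits]
  -- both words end with `ε₁ ⋯ ε_{M-1}` and `ε₁ ≥ 1`, so the increased digit lies in that suffix
  have hri : m - (M - 1) ≤ i := by
    by_contra hc
    have := hpost _ (not_le.1 hc)
    rw [← add_zero (m - (M - 1)), hsuffix y hyl 0 (by omega)] at this
    have := one_le_dig_one_zero hβ
    omega
  have h1 := hsuffix x hxl (i - (m - (M - 1))) (by omega)
  have h2 := hsuffix y hyl (i - (m - (M - 1))) (by omega)
  rw [Nat.add_sub_cancel' hri] at h1 h2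
  omega

/-! ### Runs of full words: the upper bound -/

lemma not_succIn_self {n : ℕ} (u : List ℕ) : ¬ SuccIn β n u u :=
  fun ⟨_, _, _, _, ⟨_, _, hk⟩, _⟩ => lt_irrefl _ hk

lemma succIn_of_value_concat_eq_right_end (hβ : 1 < β) {m : ℕ} {p q : List ℕ} {k b : ℕ}
    (hp : p.length = m) (hq : q.length = m) (hk : state β p = some k) (hv : Adm β (q ++ [b]))
    (hval : value β (q ++ [b]) = value β p + orbitOne β k / β ^ m) :
    SuccIn β m p q ∧ b = 0 := by
  have hβ0 : 0 < β := by linarith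
  have hqa : Adm β q := by simpa [hq] using Adm.take hv m
  obtain ⟨kv, hkv⟩ := (adm_iff_exists_state hβ0).1 hv
  have hmem : value β (q ++ [b]) ∈ cyl β q := (mem_cyl_concat.1 (value_mem_cyl hβ0 hkv)).1
  have hqv := value_eq_of_right_end_mem_cyl hβ0 hk hqa (hp.trans hq.symm)
    (by rw [hp, ← hval]; exact hmem)
  rw [hp, ← hval, value_concat, left_eq_add, div_eq_zero_iff] at hqv
  have hb : (b : ℝ) = 0 := hqv.resolve_right (by positivity)
  refine ⟨(succIn_iff hβ hk hqa hp hq).2 ?_, by exact_mod_cast hb⟩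
  rw [← hval, value_concat, hb, zero_div, add_zero]

lemma succIn_concat_of_full (hβ : 1 < β) {m : ℕ} {p q : List ℕ} {a b : ℕ}
    (hp : p.length = m) (hq : q.length = m) (hfull : state β (p ++ [a]) = some 0)
    (h : SuccIn β (m + 1) (p ++ [a]) (q ++ [b])) :
    q = p ∧ b = a + 1 ∨
      SuccIn β m p q ∧ b = 0 ∧
        ∃ k, state β p = some k ∧ FiniteLen β (k + 1) ∧ dig β 1 k = a + 1 := by
  have hβ0 : 0 < β := by linarith
  have hq0 : 0 < β ^ (m + 1) := by positivity
  rw [state_concat] at hfull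
  obtain ⟨k, hk, hstep⟩ := Option.bind_eq_some_iff.1 hfull
  have hak := step_eq_zero_iff.1 hstep
  have hva : Adm β (q ++ [b]) := h.2.2.2.1
  obtain ⟨kv, hkv⟩ := (adm_iff_exists_state hβ0).1 hva
  have hval := (succIn_iff hβ (by rwa [state_concat, hk]) hva (by simp [hp])
    (by simp [hq])).1 h
  rw [value_concat, value_concat, orbitOne_zero, hp, hq] at hval
  have hmem : value β (q ++ [b]) ∈ cyl β q := (mem_cyl_concat.1 (value_mem_cyl hβ0 hkv)).1
  have hend : orbitOne β k / β ^ m = β * orbitOne β k / β ^ (m + 1) := by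
    rw [pow_succ']; field_simp
  rcases hak.lt_or_eq with hlt | heq
  · left
    have hpq : q = p := by
      refine eq_of_mem_cyl hmem ?_ (hq.trans hp.symm)
      rw [cyl_eq_of_state hβ0 hk, value_concat, hq, hval, hp, mem_Ico, add_assoc, ← add_div]
      refine ⟨le_add_of_nonneg_right (by positivity), ?_⟩
      rw [hend]
      gcongr
    subst hpq
    refine ⟨rfl, ?_⟩
    rw [add_assoc, ← add_div, add_right_inj, div_left_inj' hq0.ne'] at hval
    exact_mod_cast hval
  · right
    obtain ⟨hS, hb⟩ := succIn_of_value_concat_eq_right_end hβ hp hq hk hva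
      (by rw [value_concat, hq, hval, hend, ← heq]; ring)
    refine ⟨hS, hb, k, hk,
      finiteLen_of_mul_orbitOne_eq_natCast hβ (a := a + 1) (orbitOne_pos_of_state hβ0.le hk)
        (by rw [← heq]; push_cast; ring), ?_⟩
    rw [dig_one_eq, ← heq]
    exact_mod_cast Nat.floor_natCast (a + 1)

/-- The counting behind the bound on runs of full words, where `p j` is the prefix and `d j` the
last digit of the `j`-th word of the run. -/
lemma length_le_of_single_move {α : Type*} {l B E : ℕ} {p : ℕ → α} {d : ℕ → ℕ}
    (hlt : ∀ j < l, d j < B)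
    (hstay : ∀ j, j + 1 < l → p (j + 1) = p j → d (j + 1) = d j + 1)
    (hmove : ∀ j, j + 1 < l → p (j + 1) ≠ p j → d (j + 1) = 0 ∧ d j < E)
    (hsingle : ∀ i j, i < j → j + 1 < l → p (i + 1) ≠ p i → p (j + 1) ≠ p j →
      p j ≠ p (i + 1)) :
    l ≤ B + E := by
  have key : ∀ j < l, j ≤ d j ∨
      ∃ i < j, p (i + 1) ≠ p i ∧ p j = p (i + 1) ∧ d j + i + 1 = j ∧ i < E := by
    intro j
    induction j with
    | zero => exact fun _ => Or.inl (Nat.zero_le _)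
    | succ j ih =>
      intro hj
      rcases ih (by omega) with hd | ⟨i, hij, hi, hpj, hdj, hiE⟩
      · by_cases hp : p (j + 1) = p j
        · exact Or.inl (by rw [hstay j hj hp]; omega)
        · obtain ⟨h0, hE⟩ := hmove j hj hp
          exact Or.inr ⟨j, j.lt_succ_self, hp, rfl, by omega, by omega⟩
      · by_cases hp : p (j + 1) = p j
        · exact Or.inr ⟨i, by omega, hi, hp.trans hpj, by rw [hstay j hj hp]; omega, hiE⟩
        · exact absurd hpj (hsingle i j hij hj hi hp)
  rcases Nat.eq_zero_or_pos l with rfl | hl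
  · exact Nat.zero_le _
  have hB := hlt (l - 1) (by omega)
  rcases key (l - 1) (by omega) with hd | ⟨i, -, -, -, hdi, hiE⟩ <;> omega

lemma add_one_le_of_state_concat_eq_zero {w : List ℕ} {a : ℕ}
    (h : state β (w ++ [a]) = some 0) : (a : ℝ) + 1 ≤ β := by
  rw [state_concat] at h
  obtain ⟨k, -, hstep⟩ := Option.bind_eq_some_iff.1 h
  have := step_eq_zero_iff.1 hstep
  have h0 := orbitOne_nonneg (β := β) k
  have h1 := orbitOne_le_one (β := β) k
  rcases le_or_gt 0 β with hβ | hβ <;> nlinarith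

lemma length_le_of_fullRun (hβ : 1 < β) (hβn : ∀ m : ℕ, β ≠ m) {m l E : ℕ} {f : ℕ → List ℕ}
    (hf : ∀ j < l, (f j).length = m + 1 ∧ Full β (f j))
    (hchain : ∀ j, j + 1 < l → SuccIn β (m + 1) (f j) (f (j + 1)))
    (hE : ∀ M, FiniteLen β M → M ≤ m → dig β 1 (M - 1) ≤ E) :
    l ≤ ⌊β⌋₊ + E := by
  have hβ0 : 0 < β := by linarith
  set p : ℕ → List ℕ := fun j => (f j).take m
  set d : ℕ → ℕ := fun j => (f j).getD m 0
  have hplen : ∀ j < l, (p j).length = m := fun j hj => by simp [p, (hf j hj).1]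
  have hsplit : ∀ j < l, f j = p j ++ [d j] := fun j hj => by
    have hlen := (hf j hj).1
    rw [← take_succ_eq_concat (by omega), List.take_of_length_le hlen.le]
  have hfull : ∀ j < l, state β (p j ++ [d j]) = some 0 := fun j hj => by
    rw [← hsplit j hj, ← full_iff hβ0]; exact (hf j hj).2
  have hnext : ∀ j, j + 1 < l → _ := fun j hj => succIn_concat_of_full hβ (hplen j (by omega))
    (hplen (j + 1) hj) (hfull j (by omega))
    (by rw [← hsplit j (by omega), ← hsplit (j + 1) hj]; exact hchain j hj)
  refine length_le_of_single_move (p := p) (d := d) (fun j hj => ?_) (fun j hj hpj => ?_)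
    (fun j hj hpj => ?_) (fun i j hij hj hpi hpj hpji => ?_)
  · have := add_one_le_of_state_concat_eq_zero (hfull j hj)
    exact Nat.lt_of_succ_le ((Nat.le_floor_iff hβ0.le).2 (by push_cast; linarith))
  · rcases hnext j hj with ⟨-, h⟩ | ⟨hS, -⟩
    · exact h
    · exact absurd (hpj ▸ hS) (not_succIn_self _)
  · rcases hnext j hj with ⟨h, -⟩ | ⟨hS, h0, k, hk, hM, hdig⟩
    · exact absurd h hpj
    · refine ⟨h0, ?_⟩
      have := hE (k + 1) hM (state_lt_of_succIn hβ hk hS)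
      rw [Nat.add_sub_cancel] at this
      omega
  · -- two moves would both leave from the critical state `M - 1`
    rcases hnext i (by omega) with ⟨h, -⟩ | ⟨hS, -, k, hk, hM, -⟩
    · exact hpi h
    rcases hnext j hj with ⟨h, -⟩ | ⟨-, -, k', hk', hM', -⟩
    · exact hpj h
    obtain rfl : k' = k := by simpa using FiniteLen.unique hM' hM
    rw [hpji] at hk'
    exact not_succIn_of_state_eq_pred hβ hβn hM (by simpa using hk) (by simpa using hk') hS

/-! ### Runs of full words: maximal runs of the extremal lengths -/

lemma state_append_of_state_eq_zero {A : List ℕ} (hA : state β A = some 0) (B : List ℕ) :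
    state β (A ++ B) = state β B := by
  rw [state_append, hA, Option.bind_some]; rfl

lemma state_concat_eq_zero {w : List ℕ} {k j : ℕ} (hw : state β w = some k)
    (hj : (j : ℝ) + 1 ≤ β * orbitOne β k) : state β (w ++ [j]) = some 0 := by
  rw [state_concat, hw, Option.bind_some, step_eq_zero_iff.2 hj]

lemma state_concat_floor (hβ : 0 ≤ β) (hβn : ∀ m : ℕ, β ≠ m) {w : List ℕ}
    (hw : state β w = some 0) : state β (w ++ [⌊β⌋₊]) = some 1 := by
  rw [state_concat, hw, Option.bind_some, step, orbitOne_zero, mul_one,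
    if_neg (not_le.2 (Nat.lt_floor_add_one β)),
    if_pos ((Nat.floor_le hβ).lt_of_ne (hβn _).symm)]

lemma state_replicate_zero (hβ : 1 ≤ β) (r : ℕ) : state β (List.replicate r 0) = some 0 := by
  induction r with
  | zero => rfl
  | succ r ih =>
    rw [List.replicate_succ']
    exact state_concat_eq_zero ih (by rw [orbitOne_zero]; push_cast; linarith)

/-- Reading zeros from a state `s < M` climbs the states until the critical one, where
`β T_β^{M-1}(1) = ε_M ≥ 1` sends the automaton back to `0`. -/
lemma foldlM_replicate_zero (hβ : 1 < β) {M : ℕ} (hM : FiniteLen β M) {s r : ℕ} (hs : s < M)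
    (hr : M ≤ s + r) : (List.replicate r 0).foldlM (step β) s = some 0 := by
  induction r generalizing s with
  | zero => omega
  | succ r ih =>
    rw [List.replicate_succ, List.foldlM_cons]
    by_cases h1 : ((0 : ℕ) : ℝ) + 1 ≤ β * orbitOne β s
    · rw [step_eq_zero_iff.2 h1]
      exact state_replicate_zero hβ.le r
    · have hsM : s ≠ M - 1 := by
        rintro rfl
        rw [FiniteLen.mul_orbitOne_pred hM hβ] at h1
        have : 1 ≤ dig β 1 (M - 1) := Nat.one_le_iff_ne_zero.2 hM.2.1
        exact h1 (by push_cast; exact_mod_cast this)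
      have h2 : ((0 : ℕ) : ℝ) < β * orbitOne β s := by
        rw [Nat.cast_zero]; exact mul_pos (by linarith) (FiniteLen.orbitOne_pos hM hs)
      rw [step, if_neg h1, if_pos h2]
      exact ih (by omega) (by omega)

lemma maxFullRun_of_consecutive (hβ : 1 < β) {n l : ℕ} (hl : 0 < l) (F : ℕ → List ℕ)
    (hlen : ∀ j ≤ l, (F j).length = n) (hfull : ∀ j < l, state β (F j) = some 0)
    (hlast : ∃ k, k ≠ 0 ∧ state β (F l) = some k)
    (hval : ∀ j < l, value β (F (j + 1)) = value β (F j) + 1 / β ^ n)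
    (hfirst : ∀ u, SuccIn β n u (F 0) → ¬ Full β u) : MaxFullRun β n l := by
  have hβ0 : 0 < β := by linarith
  have hadm : ∀ j, (∃ k, state β (F j) = some k) → Adm β (F j) :=
    fun j => (adm_iff_exists_state hβ0).2
  have hsucc : ∀ j < l, SuccIn β n (F j) (F (j + 1)) := fun j hj => by
    obtain ⟨k, hk⟩ : ∃ k, state β (F (j + 1)) = some k := by
      rcases (show j + 1 < l ∨ j + 1 = l by omega) with h | h
      · exact ⟨0, hfull _ h⟩
      · obtain ⟨k, -, hk⟩ := hlast; exact ⟨k, h ▸ hk⟩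
    rw [succIn_iff hβ (hfull j hj) (hadm _ ⟨k, hk⟩) (hlen j hj.le) (hlen _ hj), orbitOne_zero]
    exact hval j hj
  refine ⟨hl, F, fun j hj => ⟨hlen j hj.le, hadm j ⟨0, hfull j hj⟩, (full_iff hβ0).2 (hfull j hj)⟩,
    fun j hj => hsucc j (by omega), hfirst, fun u hu hfu => ?_⟩
  obtain ⟨k, hk0, hk⟩ := hlast
  have := eq_of_succIn_of_succIn hβ hu (Nat.sub_add_cancel hl ▸ hsucc (l - 1) (by omega))
  rw [this, full_iff hβ0, hk] at hfu
  exact hk0 (Option.some_inj.1 hfu)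

lemma maxFullRun_floor (hβ : 1 < β) (hβn : ∀ m : ℕ, β ≠ m) {n : ℕ} (hn : 0 < n) :
    MaxFullRun β n ⌊β⌋₊ := by
  have hβ0 : 0 < β := by linarith
  have hZ := state_replicate_zero hβ.le (n - 1)
  have hlen : ∀ j, (List.replicate (n - 1) 0 ++ [j]).length = n := fun j => by simp; omega
  refine maxFullRun_of_consecutive hβ (Nat.floor_pos.2 hβ.le)
    (fun j => List.replicate (n - 1) 0 ++ [j]) (fun j _ => hlen j)
    (fun j hj => state_concat_eq_zero hZ ?_) ⟨1, one_ne_zero, state_concat_floor hβ0.le hβn hZ⟩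
    (fun j _ => ?_) (fun u hu => ?_)
  · rw [orbitOne_zero, mul_one]
    exact_mod_cast (Nat.le_floor_iff hβ0.le).1 hj
  · rw [value_concat, value_concat, List.length_replicate, Nat.sub_add_cancel hn]
    push_cast; ring
  · -- nothing lies below `0 ⋯ 0`
    obtain ⟨k, -, hk⟩ := hu.2.2.2.2.1
    change _ < (List.replicate (n - 1) 0 ++ [0]).getD k 0 at hk
    rw [← List.replicate_succ'] at hk
    simp at hk

lemma not_full_of_succIn_concat_zero (hβ : 1 < β) (hβn : ∀ m : ℕ, β ≠ m) {M m : ℕ}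
    (hM : FiniteLen β M) {P u : List ℕ} (hPl : P.length = m) (hP : state β P = some (M - 1))
    (h : SuccIn β (m + 1) u (P ++ [0])) : ¬ Full β u := by
  intro hu
  have hul : u.length = m + 1 := h.1
  rw [← List.take_of_length_le hul.le, take_succ_eq_concat (by omega)] at h hu
  rw [full_iff (by linarith)] at hu
  rcases succIn_concat_of_full hβ (by simp; omega) hPl hu h with ⟨-, h0⟩ | ⟨hS, -, k, hk, hk1, -⟩
  · exact absurd h0 (by omega)
  · obtain rfl : k + 1 = M := FiniteLen.unique hk1 hM
    exact not_succIn_of_state_eq_pred hβ hβn hM hk hP hS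

lemma value_replicate_append_prefixDigits_one (hβ : 1 < β) {M : ℕ} (hM : FiniteLen β M)
    (r : ℕ) : value β (List.replicate r 0 ++ prefixDigits β 1 (M - 1)) =
      1 / β ^ r - dig β 1 (M - 1) / β ^ (r + M) := by
  have hβ0 : β ≠ 0 := by positivity
  have hε := FiniteLen.mul_orbitOne_pred hM hβ
  rw [value_append hβ0, value_replicate_zero, List.length_replicate,
    value_prefixDigits_one (by linarith),
    ← hε, show r + M = r + (M - 1) + 1 by have := hM.1; omega]
  field_simp
  ring

lemma state_replicate_append_prefixDigits_one (hβ : 1 < β) {M : ℕ} (hM : FiniteLen β M)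
    (r : ℕ) : state β (List.replicate r 0 ++ prefixDigits β 1 (M - 1)) = some (M - 1) := by
  rw [state_append_of_state_eq_zero (state_replicate_zero hβ.le r)]
  exact state_prefixDigits_one (by linarith) (FiniteLen.orbitOne_pos hM (by have := hM.1; omega))

lemma value_replicate_one_replicate (hβ : β ≠ 0) (r s : ℕ) :
    value β (List.replicate r 0 ++ [1] ++ List.replicate s 0) = 1 / β ^ (r + 1) := by
  rw [value_append hβ, value_concat, value_replicate_zero, value_replicate_zero,
    List.length_replicate]
  simp

lemma state_replicate_one_replicate (hβ : 1 < β) (hβn : ∀ m : ℕ, β ≠ m) {M : ℕ}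
    (hM : FiniteLen β M) (r : ℕ) :
    state β (List.replicate r 0 ++ [1] ++ List.replicate (M - 1) 0) = some 0 := by
  rw [List.append_assoc, state_append_of_state_eq_zero (state_replicate_zero hβ.le r),
    state_append]
  obtain ⟨s, hs⟩ := exists_step_eq_some (β := β) (k := 0) (j := 1)
    (by rw [orbitOne_zero, mul_one]; exact_mod_cast hβ)
  have h1 : state β [1] = some s := by
    rw [← List.nil_append [1], state_concat, state_nil, Option.bind_some, hs]
  rw [h1, Option.bind_some]
  have := FiniteLen.two_le hM hβ hβn
  rcases step_eq_some_cases hs with rfl | ⟨rfl, -⟩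
  · exact state_replicate_zero hβ.le _
  · exact foldlM_replicate_zero hβ hM (by omega) (by omega)

lemma maxFullRun_floor_add (hβ : 1 < β) (hβn : ∀ m : ℕ, β ≠ m) {M n : ℕ} (hM : FiniteLen β M)
    (hMn : M < n) : MaxFullRun β n (⌊β⌋₊ + dig β 1 (M - 1)) := by
  obtain ⟨m, rfl⟩ : ∃ m, n = m + 1 := ⟨n - 1, by omega⟩
  have hβ0 : 0 < β := by linarith
  have hM1 := hM.1
  have hE : 0 < dig β 1 (M - 1) := Nat.pos_of_ne_zero hM.2.1
  set E := dig β 1 (M - 1)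
  -- the run consists of `P ++ [j]` for `j < ε_M`, followed by `Q ++ [j]` for `j < ⌊β⌋`
  set P := List.replicate (m + 1 - M) 0 ++ prefixDigits β 1 (M - 1)
  set Q := List.replicate (m - M) 0 ++ [1] ++ List.replicate (M - 1) 0
  have hPl : P.length = m := by simp [P, length_prefixDigits]; omega
  have hQl : Q.length = m := by simp [Q]; omega
  have hP := state_replicate_append_prefixDigits_one hβ hM (m + 1 - M)
  have hQ := state_replicate_one_replicate hβ hβn hM (m - M)
  have hQP : value β Q = value β P + E / β ^ (m + 1) := by
    rw [value_replicate_one_replicate hβ0.ne', value_replicate_append_prefixDigits_one hβ hM,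
      show m - M + 1 = m + 1 - M by omega, show m + 1 - M + M = m + 1 by omega]
    ring
  set F : ℕ → List ℕ := fun j => if j < E then P ++ [j] else Q ++ [j - E]
  have hFl : ∀ j, (F j).length = m + 1 := fun j => by
    simp only [F]; split_ifs <;> simp [hPl, hQl]
  have hFval : ∀ j, value β (F j) = value β P + j / β ^ (m + 1) := fun j => by
    simp only [F]
    split_ifs with hj
    · rw [value_concat, hPl]
    · rw [value_concat, hQl, hQP, Nat.cast_sub (not_lt.1 hj)]
      ring
  refine maxFullRun_of_consecutive hβ (by omega) F (fun j _ => hFl j) (fun j hj => ?_) ?_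
    (fun j _ => by rw [hFval, hFval]; push_cast; ring) (fun u hu => ?_)
  · simp only [F]
    split_ifs with hjE
    · refine state_concat_eq_zero hP ?_
      rw [FiniteLen.mul_orbitOne_pred hM hβ]
      exact_mod_cast hjE
    · refine state_concat_eq_zero hQ ?_
      rw [orbitOne_zero, mul_one]
      exact_mod_cast (Nat.le_floor_iff hβ0.le).1 (by omega : j - E + 1 ≤ ⌊β⌋₊)
  · refine ⟨1, one_ne_zero, ?_⟩
    simp only [F, if_neg (by omega : ¬ ⌊β⌋₊ + E < E), Nat.add_sub_cancel]
    exact state_concat_floor hβ0.le hβn hQ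
  · simp only [F, if_pos hE] at hu
    exact not_full_of_succIn_concat_zero hβ hβn hM hPl hP hu

end BetaExpansion

open BetaExpansion in
/-- the maximal length of a run of full words is ⌊β⌋ + ε_M when
ε(1,β) is finite with length M < n, and ⌊β⌋ otherwise. -/
theorem stmt18 (β : ℝ) (hβ : 1 < β) (hβn : ∀ m : ℕ, β ≠ m) (n : ℕ) (hn : 0 < n) :
    (∀ M, FiniteLen β M → M < n →
      IsGreatest {l | MaxFullRun β n l} (Int.toNat ⌊β⌋ + dig β 1 (M-1))) ∧
    (((¬ ∃ M, FiniteLen β M) ∨ (∃ M, FiniteLen β M ∧ n ≤ M)) →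
      IsGreatest {l | MaxFullRun β n l} (Int.toNat ⌊β⌋)) := by
  obtain ⟨m, rfl⟩ : ∃ m, n = m + 1 := ⟨n - 1, by omega⟩
  have hbound : ∀ E, (∀ M, FiniteLen β M → M ≤ m → dig β 1 (M - 1) ≤ E) →
      ∀ l ∈ {l | MaxFullRun β (m + 1) l}, l ≤ ⌊β⌋₊ + E :=
    fun E hE l ⟨_, f, hf, hchain, _⟩ =>
      length_le_of_fullRun hβ hβn (fun j hj => ⟨(hf j hj).1, (hf j hj).2.2⟩) hchain hE
  rw [Int.floor_toNat]
  refine ⟨fun M hM hMn => ⟨maxFullRun_floor_add hβ hβn hM hMn, hbound _ fun M' hM' _ => ?_⟩,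
    fun hcase => ⟨maxFullRun_floor hβ hβn hn, hbound 0 fun M' hM' hM'm => ?_⟩⟩
  · rw [FiniteLen.unique hM' hM]
  · rcases hcase with hnone | ⟨M, hM, hnM⟩
    · exact absurd ⟨M', hM'⟩ hnone
    · have := FiniteLen.unique hM' hM
      omega
end

section
/- Let 1 < β < 2 with β ∉ ℕ, let {nᵢ} be the nonzero sequence of β, and suppose n < n₂ (where n₂ is the position of the second nonzero digit of ε(1,β)). Then Σ_β^n consists exactly of the n + 1 words 0^n, 0^{n−1}1, 0^{n−2}10, …, 10^{n−1} in increasing lexicographic order; 0^n is full and all other n words are non-full, so the set of lengths of maximal runs of non-full words is N_β^n = {n}. -/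
/-!
Since `⌊β⌋ = 1` we have `T 1 = β - 1`, and `ε₂ = ⋯ = εₙ = 0` says that `T` acts as
multiplication by `β` on `β - 1` for `n - 1` steps, so `β^(n-1) (β - 1) < 1`.
A digit `1` at position `i` forces `T^(i+1) x < β - 1`, hence `T^(i+1+t) x < β^t (β - 1)`,
which rules out a second `1` among the next `n - 1` digits. So the admissible words of length `n`
are `0^n` and the words `0^(n-1-j) 1 0^j`. The same bound shows that `T^n` maps the cylinder of
`0^(n-1-j) 1 0^j` into `[0, β^j (β - 1))`, so these words are not full, while `T^n` maps the
cylinder of `0^n` onto `[0, 1)`. Consecutive single-`1` words are lexicographic successors, so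
they form one maximal non-full run, of length `n`.
-/

open Function

section BetaTransformation

variable {β x y : ℝ} {i m : ℕ}

lemma Tb_mem_Ico (β x : ℝ) : Tb β x ∈ Set.Ico (0 : ℝ) 1 :=
  ⟨Int.fract_nonneg _, Int.fract_lt_one _⟩

lemma iterate_Tb_mem_Ico (hx : x ∈ Set.Ico (0 : ℝ) 1) : ∀ i, (Tb β)^[i] x ∈ Set.Ico (0 : ℝ) 1
  | 0 => hx
  | i + 1 => by rw [iterate_succ_apply']; exact Tb_mem_Ico β _

lemma iterate_Tb_nonneg (hx : 0 ≤ x) : ∀ i, 0 ≤ (Tb β)^[i] x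
  | 0 => hx
  | i + 1 => by rw [iterate_succ_apply']; exact (Tb_mem_Ico β _).1

lemma iterate_Tb_zero (i : ℕ) : (Tb β)^[i] 0 = 0 :=
  iterate_fixed (by simp [Tb]) i

lemma dig_eq_zero_iff : dig β x i = 0 ↔ β * (Tb β)^[i] x < 1 := by
  rw [dig, Int.toNat_eq_zero, ← Int.lt_add_one_iff, zero_add, Int.floor_lt, Int.cast_one]

lemma dig_succ : dig β x (i + 1) = dig β (Tb β x) i := by
  simp only [dig, iterate_succ_apply]

lemma Tb_eq_mul_self (h0 : 0 ≤ β * y) (h1 : β * y < 1) : Tb β y = β * y :=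
  Int.fract_eq_self.mpr ⟨h0, h1⟩

lemma Tb_le_mul_self (h : 0 ≤ β * y) : Tb β y ≤ β * y := by
  have : (0 : ℝ) ≤ ⌊β * y⌋ := by exact_mod_cast Int.floor_nonneg.mpr h
  rw [Tb]
  linarith

lemma iterate_Tb_le_pow_mul (hβ : 0 ≤ β) (hy : 0 ≤ y) : ∀ i, (Tb β)^[i] y ≤ β ^ i * y
  | 0 => by simp
  | i + 1 => by
    rw [iterate_succ_apply', pow_succ', mul_assoc]
    exact (Tb_le_mul_self (mul_nonneg hβ (iterate_Tb_nonneg hy i))).trans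
      (mul_le_mul_of_nonneg_left (iterate_Tb_le_pow_mul hβ hy i) hβ)

lemma iterate_Tb_eq_pow_mul_of_dig_eq_zero (hβ : 0 ≤ β) (hx : 0 ≤ x)
    (hd : ∀ i < m, dig β x i = 0) : ∀ i ≤ m, (Tb β)^[i] x = β ^ i * x := by
  intro i hi
  induction i with
  | zero => simp
  | succ i ih =>
    rw [iterate_succ_apply', Tb_eq_mul_self (mul_nonneg hβ (iterate_Tb_nonneg hx i))
      (dig_eq_zero_iff.mp (hd i hi)), ih (by omega), pow_succ', mul_assoc]

lemma dig_eq_zero_of_pow_mul_lt_one (hβ : 1 ≤ β) (hx : 0 ≤ x) (h : β ^ m * x < 1) :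
    ∀ i < m, dig β x i = 0 := by
  intro i
  induction i using Nat.strong_induction_on with
  | _ i ih =>
    intro hi
    rw [dig_eq_zero_iff, iterate_Tb_eq_pow_mul_of_dig_eq_zero (by linarith) hx
      (fun k hk => ih k hk (by omega)) i le_rfl, ← mul_assoc, ← pow_succ']
    calc β ^ (i + 1) * x ≤ β ^ m * x := mul_le_mul_of_nonneg_right (pow_le_pow_right₀ hβ hi) hx
      _ < 1 := h

lemma iterate_Tb_lt_of_dig_ne_zero (hβ : 0 < β) (hx : x ∈ Set.Ico (0 : ℝ) 1)
    (hi : dig β x i ≠ 0) (t : ℕ) : (Tb β)^[i + 1 + t] x < β ^ t * (β - 1) := by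
  have hTi := iterate_Tb_mem_Ico (β := β) hx i
  have hfloor : (1 : ℝ) ≤ ⌊β * (Tb β)^[i] x⌋ := by
    have : 1 ≤ β * (Tb β)^[i] x := not_lt.mp (mt dig_eq_zero_iff.mpr hi)
    exact_mod_cast Int.le_floor.mpr (by exact_mod_cast this)
  have hlt : (Tb β)^[i + 1] x < β - 1 := by
    rw [iterate_succ_apply', Tb]
    nlinarith [hTi.2]
  rw [add_comm (i + 1) t, iterate_add_apply]
  calc (Tb β)^[t] ((Tb β)^[i + 1] x) ≤ β ^ t * (Tb β)^[i + 1] x :=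
        iterate_Tb_le_pow_mul hβ.le (iterate_Tb_nonneg hx.1 _) t
    _ < β ^ t * (β - 1) := mul_lt_mul_of_pos_left hlt (pow_pos hβ t)

end BetaTransformation

section BaseBetweenOneAndTwo

variable {β x : ℝ} {n i i' : ℕ}

lemma dig_le_one (hβ : 0 ≤ β) (h2 : β < 2) (hx : x ∈ Set.Ico (0 : ℝ) 1) (i : ℕ) :
    dig β x i ≤ 1 := by
  have hTi := iterate_Tb_mem_Ico (β := β) hx i
  have : ⌊β * (Tb β)^[i] x⌋ < 2 := Int.floor_lt.mpr (by push_cast; nlinarith [hTi.1, hTi.2])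
  unfold dig
  omega

lemma Tb_one (h1 : 1 ≤ β) (h2 : β < 2) : Tb β 1 = β - 1 := by
  have : ⌊β⌋ = 1 := Int.floor_eq_iff.mpr ⟨by exact_mod_cast h1, by push_cast; linarith⟩
  simp [Tb, this]

lemma pow_pred_mul_sub_one_lt_one (h1 : 1 < β) (h2 : β < 2)
    (hn2 : ∀ k, 2 ≤ k → k ≤ n → dig β 1 (k - 1) = 0) : β ^ (n - 1) * (β - 1) < 1 := by
  have hc : β - 1 ∈ Set.Ico (0 : ℝ) 1 := ⟨by linarith, by linarith⟩
  have hd : ∀ i < n - 1, dig β (β - 1) i = 0 := fun i hi => by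
    rw [← Tb_one h1.le h2, ← dig_succ]
    exact hn2 (i + 2) (by omega) (by omega)
  rw [← iterate_Tb_eq_pow_mul_of_dig_eq_zero (by linarith) hc.1 hd (n - 1) le_rfl]
  exact (iterate_Tb_mem_Ico hc _).2

lemma dig_eq_zero_of_dig_ne_zero (h1 : 1 ≤ β) (hsmall : β ^ (n - 1) * (β - 1) < 1)
    (hx : x ∈ Set.Ico (0 : ℝ) 1) (hi : dig β x i ≠ 0) (hii' : i < i') (hi' : i' < i + n) :
    dig β x i' = 0 := by
  obtain ⟨t, rfl⟩ : ∃ t, i' = i + 1 + t := ⟨i' - i - 1, by omega⟩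
  rw [dig_eq_zero_iff]
  calc β * (Tb β)^[i + 1 + t] x < β * (β ^ t * (β - 1)) :=
        mul_lt_mul_of_pos_left (iterate_Tb_lt_of_dig_ne_zero (by linarith) hx hi t) (by linarith)
    _ = β ^ (t + 1) * (β - 1) := by ring
    _ ≤ β ^ (n - 1) * (β - 1) :=
        mul_le_mul_of_nonneg_right (pow_le_pow_right₀ h1 (by omega)) (by linarith)
    _ < 1 := hsmall

end BaseBetweenOneAndTwo

section Words

variable {n i j : ℕ}

def oneWord (n j : ℕ) : List ℕ := List.replicate (n - 1 - j) 0 ++ 1 :: List.replicate j 0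

lemma oneWord_length (hj : j < n) : (oneWord n j).length = n := by
  simp [oneWord]
  omega

lemma oneWord_getD (n j i : ℕ) : (oneWord n j).getD i 0 = if i = n - 1 - j then 1 else 0 := by
  simp only [oneWord, List.getD_eq_getElem?_getD, List.getElem?_append, List.getElem?_cons,
    List.getElem?_replicate, List.length_replicate]
  split_ifs <;> first | omega | simp

lemma oneWord_getElem (h : i < (oneWord n j).length) :
    (oneWord n j)[i] = if i = n - 1 - j then 1 else 0 := by
  rw [← List.getD_eq_getElem _ 0 h, oneWord_getD]

lemma wordSeq_replicate_zero (n i : ℕ) : wordSeq (List.replicate n 0) i = 0 := by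
  simp only [wordSeq, List.getD_eq_getElem?_getD, List.getElem?_replicate]
  split_ifs <;> rfl

lemma not_wlt_replicate_zero (u : List ℕ) : ¬ wlt u (List.replicate n 0) := by
  rintro ⟨k, -, hk⟩
  rw [wordSeq_replicate_zero] at hk
  exact Nat.not_lt_zero _ hk

lemma wlt_oneWord_iff (hi : i < n) (hj : j < n) : wlt (oneWord n i) (oneWord n j) ↔ i < j := by
  simp only [wlt, seqLt, wordSeq, oneWord_getD]
  constructor
  · rintro ⟨k, heq, hlt⟩
    by_contra hji
    split_ifs at hlt with hki hkj <;> try omega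
    have := heq (n - 1 - i) (by omega)
    rw [if_pos rfl, if_neg (by omega)] at this
    exact one_ne_zero this
  · intro hij
    refine ⟨n - 1 - j, fun t ht => ?_, ?_⟩ <;> split_ifs <;> omega

end Words

section AdmissibleWords

variable {β : ℝ} {n : ℕ} {w : List ℕ}

lemma adm_replicate_zero (n : ℕ) : Adm β (List.replicate n 0) :=
  ⟨0, ⟨le_rfl, one_pos⟩, fun i _ => by simp [dig, iterate_Tb_zero]⟩

lemma adm_oneWord (h1 : 1 < β) (n j : ℕ) : Adm β (oneWord n j) := by
  have hβ : 0 < β := by linarith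
  set a := n - 1 - j with ha
  set x : ℝ := (β ^ (a + 1))⁻¹ with hx
  have hx0 : 0 ≤ x := by positivity
  have hx1 : x < 1 := inv_lt_one_of_one_lt₀ (one_lt_pow₀ h1 (by omega))
  have hxa : β ^ a * x = β⁻¹ := by
    rw [hx, pow_succ, mul_inv, ← mul_assoc, mul_inv_cancel₀ (pow_pos hβ a).ne', one_mul]
  have hd : ∀ i < a, dig β x i = 0 :=
    dig_eq_zero_of_pow_mul_lt_one h1.le hx0 (hxa ▸ inv_lt_one_of_one_lt₀ h1)
  have hone : β * (Tb β)^[a] x = 1 := by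
    rw [iterate_Tb_eq_pow_mul_of_dig_eq_zero hβ.le hx0 hd a le_rfl, hxa, mul_inv_cancel₀ hβ.ne']
  have htail : ∀ t, (Tb β)^[a + 1 + t] x = 0 := fun t => by
    rw [add_comm, iterate_add_apply, iterate_succ_apply', Tb, hone, Int.floor_one, Int.cast_one,
      sub_self, iterate_Tb_zero]
  refine ⟨x, ⟨hx0, hx1⟩, fun i hi => ?_⟩
  rw [oneWord_getElem, ← ha]
  rcases lt_trichotomy i a with hia | rfl | hia
  · rw [if_neg hia.ne, hd i hia]
  · simp [dig, hone]
  · obtain ⟨t, rfl⟩ : ∃ t, i = a + 1 + t := ⟨i - a - 1, by omega⟩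
    rw [if_neg hia.ne']
    simp [dig, htail]

lemma eq_oneWord_of_getElem (hw : w.length = n) {m : ℕ} (hm : m < n)
    (h : ∀ i (hi : i < w.length), w[i] = if i = m then 1 else 0) : w = oneWord n (n - 1 - m) := by
  refine List.ext_getElem (by rw [hw, oneWord_length (by omega)]) fun i hi hi' => ?_
  rw [h i hi, oneWord_getElem, show n - 1 - (n - 1 - m) = m by omega]

lemma length_eq_and_adm_iff (h1 : 1 < β) (h2 : β < 2) (hsmall : β ^ (n - 1) * (β - 1) < 1) :
    w.length = n ∧ Adm β w ↔ w = List.replicate n 0 ∨ ∃ j, j < n ∧ w = oneWord n j := by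
  constructor
  · rintro ⟨hw, x, hx, hd⟩
    by_cases hz : ∀ i (hi : i < w.length), w[i] = 0
    · exact Or.inl (List.eq_replicate_iff.mpr ⟨hw, fun a ha =>
        let ⟨i, hi, hia⟩ := List.getElem_of_mem ha; hia ▸ hz i hi⟩)
    push Not at hz
    obtain ⟨m, hm, hwm⟩ := hz
    have hdm : dig β x m ≠ 0 := hd m hm ▸ hwm
    have hother : ∀ i < n, i ≠ m → dig β x i = 0 := by
      intro i hi him
      rcases Nat.lt_or_gt_of_ne him with him | hmi
      · by_contra hdi
        exact hdm (dig_eq_zero_of_dig_ne_zero h1.le hsmall hx hdi him (by omega))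
      · exact dig_eq_zero_of_dig_ne_zero h1.le hsmall hx hdm hmi (by omega)
    refine Or.inr ⟨n - 1 - m, by omega, eq_oneWord_of_getElem hw (by omega) fun i hi => ?_⟩
    rw [hd i hi]
    split_ifs with him
    · subst him
      exact le_antisymm (dig_le_one (by linarith) h2 hx i) (Nat.one_le_iff_ne_zero.mpr hdm)
    · exact hother i (by omega) him
  · rintro (rfl | ⟨j, hj, rfl⟩)
    · exact ⟨List.length_replicate, adm_replicate_zero n⟩
    · exact ⟨oneWord_length hj, adm_oneWord h1 n j⟩

end AdmissibleWords

section FullWords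

variable {β : ℝ} {n j : ℕ}

lemma full_replicate_zero (h1 : 1 < β) (n : ℕ) : Full β (List.replicate n 0) := by
  have hβ : 0 < β := by linarith
  refine Set.Subset.antisymm ?_ fun y hy => ?_
  · rintro _ ⟨x, hx, rfl⟩
    exact iterate_Tb_mem_Ico hx.1 _
  have hpow : 1 ≤ β ^ n := one_le_pow₀ h1.le
  set x := y / β ^ n with hx
  have hx0 : 0 ≤ x := div_nonneg hy.1 (by linarith)
  have hxy : β ^ n * x = y := mul_div_cancel₀ y (by linarith)
  have hd := dig_eq_zero_of_pow_mul_lt_one h1.le hx0 (hxy ▸ hy.2)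
  refine ⟨x, ⟨⟨hx0, (div_le_self hy.1 hpow).trans_lt hy.2⟩, fun i hi => ?_⟩, ?_⟩
  · rw [List.getElem_replicate, hd i (by simpa using hi)]
  · rw [List.length_replicate, iterate_Tb_eq_pow_mul_of_dig_eq_zero hβ.le hx0 hd n le_rfl, hxy]

lemma not_full_oneWord (h1 : 1 < β) (hsmall : β ^ (n - 1) * (β - 1) < 1) (hj : j < n) :
    ¬ Full β (oneWord n j) := by
  intro hfull
  have hy : β ^ j * (β - 1) ∈ Set.Ico (0 : ℝ) 1 :=
    ⟨mul_nonneg (pow_nonneg (by linarith) j) (by linarith),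
      (mul_le_mul_of_nonneg_right (pow_le_pow_right₀ h1.le (by omega)) (by linarith)).trans_lt
        hsmall⟩
  rw [Full, oneWord_length hj] at hfull
  obtain ⟨x, ⟨hx, hd⟩, hTx⟩ := hfull ▸ hy
  have hone : dig β x (n - 1 - j) ≠ 0 := by
    rw [← hd _ (by rw [oneWord_length hj]; omega), oneWord_getElem, if_pos rfl]
    exact one_ne_zero
  have := iterate_Tb_lt_of_dig_ne_zero (by linarith) hx hone j
  rw [show n - 1 - j + 1 + j = n by omega, hTx] at this
  exact lt_irrefl _ this

end FullWords

section Runs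

variable {β : ℝ} {n i j l : ℕ}

lemma succIn_oneWord_iff (h1 : 1 < β) (h2 : β < 2) (hsmall : β ^ (n - 1) * (β - 1) < 1)
    (hi : i < n) (hj : j < n) : SuccIn β n (oneWord n i) (oneWord n j) ↔ j = i + 1 := by
  constructor
  · rintro ⟨-, -, -, -, hij, hnone⟩
    rw [wlt_oneWord_iff hi hj] at hij
    by_contra hne
    exact hnone ⟨oneWord n (i + 1), oneWord_length (by omega), adm_oneWord h1 n (i + 1),
      (wlt_oneWord_iff hi (by omega)).mpr (by omega), (wlt_oneWord_iff (by omega) hj).mpr (by omega)⟩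
  · rintro rfl
    refine ⟨oneWord_length hi, oneWord_length hj, adm_oneWord h1 n i, adm_oneWord h1 n (i + 1),
      (wlt_oneWord_iff hi hj).mpr (by omega), ?_⟩
    rintro ⟨z, hzn, hz, hiz, hzj⟩
    rcases (length_eq_and_adm_iff h1 h2 hsmall).mp ⟨hzn, hz⟩ with rfl | ⟨k, hk, rfl⟩
    · exact not_wlt_replicate_zero _ hiz
    · rw [wlt_oneWord_iff hi hk] at hiz
      rw [wlt_oneWord_iff hk hj] at hzj
      omega

lemma exists_eq_oneWord_of_not_full (h1 : 1 < β) (h2 : β < 2)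
    (hsmall : β ^ (n - 1) * (β - 1) < 1) {w : List ℕ} (hw : w.length = n) (hadm : Adm β w)
    (hnf : ¬ Full β w) : ∃ j, j < n ∧ w = oneWord n j := by
  rcases (length_eq_and_adm_iff h1 h2 hsmall).mp ⟨hw, hadm⟩ with rfl | h
  · exact absurd (full_replicate_zero h1 n) hnf
  · exact h

lemma eq_of_maxNonFullRun (h1 : 1 < β) (h2 : β < 2) (hsmall : β ^ (n - 1) * (β - 1) < 1)
    (hrun : MaxNonFullRun β n l) : l = n := by
  obtain ⟨hl, f, hnf, hsucc, hfirst, hlast⟩ := hrun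
  have hf : ∀ j < l, ∃ m, m < n ∧ f j = oneWord n m := fun j hj =>
    exists_eq_oneWord_of_not_full h1 h2 hsmall (hnf j hj).1 (hnf j hj).2.1 (hnf j hj).2.2
  have hfj : ∀ j < l, j < n ∧ f j = oneWord n j := by
    intro j hj
    induction j with
    | zero =>
      obtain ⟨m, hm, hfm⟩ := hf 0 hj
      cases m with
      | zero => exact ⟨hm, hfm⟩
      | succ m =>
        have hpred := (succIn_oneWord_iff h1 h2 hsmall (by omega) hm).mpr rfl
        rw [← hfm] at hpred
        exact absurd (hfirst _ hpred) (not_full_oneWord h1 hsmall (by omega))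
    | succ j ih =>
      obtain ⟨hjn, hfj⟩ := ih (by omega)
      obtain ⟨m, hm, hfm⟩ := hf (j + 1) hj
      have hs := hsucc j hj
      rw [hfj, hfm, succIn_oneWord_iff h1 h2 hsmall hjn hm] at hs
      exact ⟨hs ▸ hm, hs ▸ hfm⟩
  obtain ⟨hln, hfl⟩ := hfj (l - 1) (by omega)
  by_contra hne
  have hnext := (succIn_oneWord_iff h1 h2 hsmall hln (j := l) (by omega)).mpr (by omega)
  rw [← hfl] at hnext
  exact not_full_oneWord h1 hsmall (by omega) (hlast _ hnext)

lemma maxNonFullRun_self (h1 : 1 < β) (h2 : β < 2) (hsmall : β ^ (n - 1) * (β - 1) < 1)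
    (hn : 0 < n) : MaxNonFullRun β n n := by
  refine ⟨hn, oneWord n, fun j hj => ⟨oneWord_length hj, adm_oneWord h1 n j,
    not_full_oneWord h1 hsmall hj⟩, fun j hj => (succIn_oneWord_iff h1 h2 hsmall (by omega) hj).mpr
    rfl, fun u hu => ?_, fun u hu => ?_⟩
  · obtain ⟨hun, -, hu, -, hlt, -⟩ := hu
    rcases (length_eq_and_adm_iff h1 h2 hsmall).mp ⟨hun, hu⟩ with rfl | ⟨k, hk, rfl⟩
    · exact full_replicate_zero h1 n
    · exact absurd ((wlt_oneWord_iff hk hn).mp hlt) (Nat.not_lt_zero k)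
  · obtain ⟨-, hun, -, hu, hlt, -⟩ := hu
    rcases (length_eq_and_adm_iff h1 h2 hsmall).mp ⟨hun, hu⟩ with rfl | ⟨k, hk, rfl⟩
    · exact absurd hlt (not_wlt_replicate_zero _)
    · have := (wlt_oneWord_iff (by omega) hk).mp hlt
      omega

end Runs

/-- for 1 < β < 2 with n < n₂, Σ_β^n consists of 0^n and the n words
0^{n−1−j}10^j (j < n) in increasing lexicographic order; 0^n is full, the others
are non-full, and N_β^n = {n}. -/
theorem stmt19 (β : ℝ) (h1 : 1 < β) (h2 : β < 2) (n : ℕ) (hn : 0 < n)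
    (hn2 : ∀ k, 2 ≤ k → k ≤ n → dig β 1 (k-1) = 0) :
    ({w : List ℕ | w.length = n ∧ Adm β w} =
      {List.replicate n 0} ∪
        {w | ∃ j, j < n ∧ w = List.replicate (n-1-j) 0 ++ 1 :: List.replicate j 0}) ∧
    (∀ i j, i < j → j < n →
      wlt (List.replicate (n-1-i) 0 ++ 1 :: List.replicate i 0)
          (List.replicate (n-1-j) 0 ++ 1 :: List.replicate j 0)) ∧
    Full β (List.replicate n 0) ∧
    (∀ j, j < n → ¬ Full β (List.replicate (n-1-j) 0 ++ 1 :: List.replicate j 0)) ∧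
    {l | MaxNonFullRun β n l} = {n} := by
  have hsmall := pow_pred_mul_sub_one_lt_one h1 h2 hn2
  refine ⟨Set.ext fun w => length_eq_and_adm_iff h1 h2 hsmall,
    fun i j hij hj => (wlt_oneWord_iff (by omega) hj).mpr hij, full_replicate_zero h1 n,
    fun j hj => not_full_oneWord h1 hsmall hj, ?_⟩
  ext l
  refine ⟨eq_of_maxNonFullRun h1 h2 hsmall, ?_⟩
  rintro rfl
  exact maxNonFullRun_self h1 h2 hsmall hn
end
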